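/- arXiv:1606.03340 — 4 statements merged into one kernel-verified Lean document; each statement's English description precedes it below -/
import Mathlib

section
/- Let (X,d,μ) be a metric measure space and λ: X×(0,∞)→(0,∞) a dominating function with constant C_λ, i.e. r ↦ λ(x,r) is nondecreasing and μ(B(x,r)) ≤ λ(x,r) ≤ C_λ·λ(x,r/2) for all x ∈ X and r > 0. Define λ̃(x,r) := inf_{z ∈ X} λ(z, r + d(x,z)). Then λ̃ is again a dominating function with the same constant C_λ (i.e. nondecreasing in r and μ(B(x,r)) ≤ λ̃(x,r) ≤ C_λ·λ̃(x,r/2)), satisfies λ̃(x,r) ≤ λ(x,r) for all x and r, and has the additional property λ̃(x,r) ≤ C_λ·λ̃(y,r) whenever d(x,y) ≤ r. -/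
open MeasureTheory Metric Set ENNReal

noncomputable section

variable {X : Type*} [MetricSpace X] [MeasurableSpace X] [BorelSpace X]

/-- The support of a measure on a metric space: points all of whose balls have
positive measure. -/
def msupport (μ : Measure X) : Set X := {x | ∀ r : ℝ, 0 < r → 0 < μ (ball x r)}

/-- `(X, d, μ)` is upper doubling with dominating function `lam` and constant `Cl`. -/
structure IsUpperDoubling (μ : Measure X) (lam : X → ℝ → ℝ) (Cl : ℝ) : Prop where
  one_lt : 1 < Cl
  lam_pos : ∀ x r, 0 < r → 0 < lam x r
  lam_mono : ∀ x r₁ r₂, 0 < r₁ → r₁ ≤ r₂ → lam x r₁ ≤ lam x r₂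
  measure_le : ∀ x r, 0 < r → μ (ball x r) ≤ ENNReal.ofReal (lam x r)
  halving : ∀ x r, 0 < r → lam x r ≤ Cl * lam x (r / 2)
  close : ∀ x y r, 0 < r → dist x y ≤ r → lam x r ≤ Cl * lam y r

/-- `(X, d)` is geometrically doubling with constant `C` and doubling dimension `n`:
every `r`-separated subset of a ball of radius `R ≥ r` has cardinality at most `C (R/r)^n`. -/
def GeometricallyDoubling (X : Type*) [MetricSpace X] (C : ℝ) (n : ℕ) : Prop :=
  ∀ (x : X) (R r : ℝ), 0 < r → r ≤ R →
    ∀ S : Finset X, (↑S : Set X) ⊆ ball x R →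
      (∀ a ∈ S, ∀ b ∈ S, a ≠ b → r ≤ dist a b) → (S.card : ℝ) ≤ C * (R / r) ^ n

/-- `ω` is a Dini modulus of continuity. -/
structure IsDiniModulus (ω : ℝ → ℝ) : Prop where
  nonneg : ∀ t, 0 ≤ t → 0 ≤ ω t
  mono : MonotoneOn ω (Set.Ici 0)
  subadd : ∀ s t, 0 ≤ s → 0 ≤ t → ω (s + t) ≤ ω s + ω t
  zero : ω 0 = 0
  pos : ∀ t, 0 < t → 0 < ω t
  summable : Summable (fun j : ℕ => ω ((2 : ℝ) ^ (-(j : ℤ))))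

/-- The Dini norm `∑_{j ≥ 0} ω(2^{-j})`. -/
def diniNorm (ω : ℝ → ℝ) : ℝ := ∑' j : ℕ, ω ((2 : ℝ) ^ (-(j : ℤ)))

/-- `K` is a Calderón–Zygmund kernel with size constant `CK` and modulus of continuity `ω`,
relative to the dominating function `lam`. -/
structure IsCZKernel (lam : X → ℝ → ℝ) (K : X → X → ℂ) (CK : ℝ) (ω : ℝ → ℝ) : Prop where
  size : ∀ x y, x ≠ y → ‖K x y‖ ≤ CK / lam x (dist x y)
  smooth : ∀ x x' y, x ≠ y → dist x x' < dist x y / 2 →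
    ‖K x y - K x' y‖ + ‖K y x - K y x'‖ ≤ ω (dist x x' / dist x y) / lam x (dist x y)

/-- The maximal truncation `T^♯ f(x) = sup_{ε > 0} |∫_{d(x,y) > ε} K(x,y) f(y) dμ(y)|`,
valued in `ℝ≥0∞`. -/
noncomputable def Tsharp (μ : Measure X) (K : X → X → ℂ) (f : X → ℂ) (x : X) : ℝ≥0∞ :=
  ⨆ (ε : ℝ) (_ : 0 < ε), ENNReal.ofReal ‖∫ y in (closedBall x ε)ᶜ, K x y * f y ∂μ‖

/-- `T` is an `L²(μ)`-bounded Calderón–Zygmund operator with kernel `K` and `L²` norm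
bound `CT`. -/
structure IsCZOperator (μ : Measure X) (K : X → X → ℂ) (T : (X → ℂ) → X → ℂ) (CT : ℝ) :
    Prop where
  map_add : ∀ f g, MemLp f 2 μ → MemLp g 2 μ → T (f + g) = T f + T g
  map_smul : ∀ (c : ℂ) (f), MemLp f 2 μ → T (c • f) = c • T f
  norm_bound : ∀ f, MemLp f 2 μ → eLpNorm (T f) 2 μ ≤ ENNReal.ofReal CT * eLpNorm f 2 μ
  rep : ∀ f : X → ℂ, (∃ M, ∀ x, ‖f x‖ ≤ M) → Bornology.IsBounded (Function.support f) →
    ∀ x, x ∉ tsupport f → T f x = ∫ y, K x y * f y ∂μ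

/-- A David–Mattila lattice with parameters `C0, A0` associated to `μ`:
for each generation `k` a Borel partition `cells k` of `supp μ`, each cell `Q` carrying a
ball `B(Q) = B(center k Q, radius k Q)`. -/
structure DavidMattila (μ : Measure X) (C0 A0 : ℝ) where
  cells : ℕ → Set (Set X)
  center : ℕ → Set X → X
  radius : ℕ → Set X → ℝ
  measurable : ∀ k, ∀ Q ∈ cells k, MeasurableSet Q
  cover : ∀ k, ⋃₀ cells k = msupport μ
  pairwise_disjoint : ∀ k, ∀ Q ∈ cells k, ∀ R ∈ cells k, Q ≠ R → Disjoint Q R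
  nested : ∀ k l, k < l → ∀ Q ∈ cells l, ∀ R ∈ cells k, Q ⊆ R ∨ Disjoint Q R
  center_mem : ∀ k, ∀ Q ∈ cells k, center k Q ∈ msupport μ
  radius_lb : ∀ k, ∀ Q ∈ cells k, A0 ^ (-(k : ℤ)) ≤ radius k Q
  radius_ub : ∀ k, ∀ Q ∈ cells k, radius k Q ≤ C0 * A0 ^ (-(k : ℤ))
  ball_subset : ∀ k, ∀ Q ∈ cells k, msupport μ ∩ ball (center k Q) (radius k Q) ⊆ Q
  subset_ball : ∀ k, ∀ Q ∈ cells k, Q ⊆ msupport μ ∩ ball (center k Q) (28 * radius k Q)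
  disjoint_five : ∀ k, ∀ Q ∈ cells k, ∀ R ∈ cells k, Q ≠ R →
    Disjoint (ball (center k Q) (5 * radius k Q)) (ball (center k R) (5 * radius k R))
  nondoubling : ∀ k, ∀ Q ∈ cells k,
    ENNReal.ofReal C0 * μ (ball (center k Q) (radius k Q)) <
        μ (ball (center k Q) (100 * radius k Q)) →
      radius k Q = A0 ^ (-(k : ℤ)) ∧
      ∀ c : ℝ, 1 ≤ c → c ≤ C0 →
        ENNReal.ofReal C0 * μ (ball (center k Q) (c * radius k Q)) ≤
          μ (ball (center k Q) (100 * c * radius k Q))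

/-- The average `A(f,Q) = μ(αB(Q))⁻¹ ∫_{30B(Q)} |f| dμ` attached to a ball `B(z,r)`. -/
noncomputable def cellAvg (μ : Measure X) (α : ℝ) (f : X → ℂ) (z : X) (r : ℝ) : ℝ≥0∞ :=
  (∫⁻ y in ball z (30 * r), ‖f y‖₊ ∂μ) / μ (ball z (α * r))

/-- `Θ(Q) = μ(αB(Q)) / λ(z_Q, α r(Q))`. -/
noncomputable def theta (μ : Measure X) (lam : X → ℝ → ℝ) (α : ℝ) (z : X) (r : ℝ) : ℝ≥0∞ :=
  μ (ball z (α * r)) / ENNReal.ofReal (lam z (α * r))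

/-- The maximal function `M_λ f(x) = sup_{R>0} λ(x,R)⁻¹ ∫_{B(x,R)} |f| dμ`. -/
noncomputable def Mlam (μ : Measure X) (lam : X → ℝ → ℝ) (f : X → ℂ) (x : X) : ℝ≥0∞ :=
  ⨆ (R : ℝ) (_ : 0 < R), (∫⁻ y in ball x R, ‖f y‖₊ ∂μ) / ENNReal.ofReal (lam x R)

/-- The localized grand maximal truncated operator `N_{Q₀}`. -/
noncomputable def grandMax (μ : Measure X) {C0 A0 : ℝ} (D : DavidMattila μ C0 A0)
    (K : X → X → ℂ) (Q0 : Set X) (f : X → ℂ) (x : X) : ℝ≥0∞ :=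
  Q0.indicator (fun x' =>
    ⨆ (k : ℕ) (P : Set X) (_ : P ∈ D.cells k) (_ : x' ∈ P) (_ : P ⊆ Q0) (y : X) (_ : y ∈ P),
      ENNReal.ofReal
        ‖∫ z in (ball (D.center k P) (30 * D.radius k P))ᶜ, K y z * f z ∂μ‖) x

/-- `∫_S w dμ` for a weight `w`. -/
noncomputable def wInt (μ : Measure X) (w : X → ℝ) (S : Set X) : ℝ≥0∞ :=
  ∫⁻ x in S, ENNReal.ofReal (w x) ∂μ

end

/-! The regularization `λ̃(x, r) = inf_z λ(z, r + d(x, z))` inherits every property termwise: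
`B(x, r) ⊆ B(z, r + d(x, z))` gives the measure bound, and `d(x, y) ≤ r` gives
`r + d(x, z) ≤ 2 (r + d(y, z))`, so one doubling step of `λ(z, ·)` compares `λ̃(x, r)`
with `λ̃(y, r)`. -/

namespace DominatingFunction

variable {X : Type*} {lam : X → ℝ → ℝ} {Cl : ℝ}

theorem const_pos_of_halving (hpos : ∀ x r, 0 < r → 0 < lam x r)
    (hhalf : ∀ x r, 0 < r → lam x r ≤ Cl * lam x (r / 2)) (x : X) : 0 < Cl :=
  pos_of_mul_pos_left ((hpos x 1 one_pos).trans_le (hhalf x 1 one_pos))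
    (hpos x _ one_half_pos).le

theorem le_mul_of_le_two_mul (hmono : ∀ x r₁ r₂, 0 < r₁ → r₁ ≤ r₂ → lam x r₁ ≤ lam x r₂)
    (hhalf : ∀ x r, 0 < r → lam x r ≤ Cl * lam x (r / 2)) (z : X) {s t : ℝ} (ht : 0 < t)
    (hts : t ≤ 2 * s) : lam z t ≤ Cl * lam z s :=
  calc lam z t ≤ lam z (2 * s) := hmono z _ _ ht hts
    _ ≤ Cl * lam z (2 * s / 2) := hhalf z _ (by linarith)
    _ = Cl * lam z s := by rw [mul_div_cancel_left₀ s two_ne_zero]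

variable [PseudoMetricSpace X]

noncomputable def regularize (lam : X → ℝ → ℝ) (x : X) (r : ℝ) : ℝ := ⨅ z, lam z (r + dist x z)

theorem regularize_nonneg (hpos : ∀ x r, 0 < r → 0 < lam x r) (x : X) {r : ℝ} (hr : 0 < r) :
    0 ≤ regularize lam x r :=
  have : Nonempty X := ⟨x⟩
  le_ciInf fun z => (hpos z _ (by positivity)).le

theorem regularize_le (hpos : ∀ x r, 0 < r → 0 < lam x r) {x : X} {r : ℝ} (hr : 0 < r)
    (z : X) : regularize lam x r ≤ lam z (r + dist x z) :=
  ciInf_le ⟨0, by rintro _ ⟨w, rfl⟩; exact (hpos w _ (by positivity)).le⟩ z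

theorem regularize_le_self (hpos : ∀ x r, 0 < r → 0 < lam x r) {x : X} {r : ℝ} (hr : 0 < r) :
    regularize lam x r ≤ lam x r := by
  simpa using regularize_le hpos (x := x) hr x

theorem regularize_le_mul_regularize (hpos : ∀ x r, 0 < r → 0 < lam x r) (hCl : 0 ≤ Cl)
    {x y : X} {r s : ℝ} (hr : 0 < r) (h : ∀ z, lam z (r + dist x z) ≤ Cl * lam z (s + dist y z)) :
    regularize lam x r ≤ Cl * regularize lam y s := by
  have : Nonempty X := ⟨y⟩
  rw [regularize, regularize, Real.mul_iInf_of_nonneg hCl]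
  exact le_ciInf fun z => (regularize_le hpos hr z).trans (h z)

theorem regularize_mono (hpos : ∀ x r, 0 < r → 0 < lam x r)
    (hmono : ∀ x r₁ r₂, 0 < r₁ → r₁ ≤ r₂ → lam x r₁ ≤ lam x r₂)
    {x : X} {r₁ r₂ : ℝ} (hr₁ : 0 < r₁) (hr : r₁ ≤ r₂) :
    regularize lam x r₁ ≤ regularize lam x r₂ := by
  simpa using regularize_le_mul_regularize hpos zero_le_one hr₁ fun z => by
    simpa using hmono z _ _ (by positivity) (by linarith)

theorem measure_ball_le_ofReal_regularize [MeasurableSpace X] {μ : Measure X}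
    (hpos : ∀ x r, 0 < r → 0 < lam x r)
    (hmeas : ∀ x r, 0 < r → μ (ball x r) ≤ ENNReal.ofReal (lam x r)) {x : X} {r : ℝ}
    (hr : 0 < r) : μ (ball x r) ≤ ENNReal.ofReal (regularize lam x r) := by
  have : Nonempty X := ⟨x⟩
  rw [ENNReal.le_ofReal_iff_toReal_le (ne_top_of_le_ne_top ofReal_ne_top (hmeas x r hr))
    (regularize_nonneg hpos x hr)]
  refine le_ciInf fun z => toReal_le_of_le_ofReal (hpos z _ (by positivity)).le ?_
  exact (measure_mono (ball_subset_ball' le_rfl)).trans (hmeas z _ (by positivity))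

end DominatingFunction

open DominatingFunction

open MeasureTheory Metric Set ENNReal in
theorem dominating_function_regularization_general
    {X : Type*} [MetricSpace X] [MeasurableSpace X]
    (μ : Measure X)
    (lam : X → ℝ → ℝ) (Cl : ℝ)
    (hpos : ∀ x r, 0 < r → 0 < lam x r)
    (hmono : ∀ x r₁ r₂, 0 < r₁ → r₁ ≤ r₂ → lam x r₁ ≤ lam x r₂)
    (hmeas : ∀ x r, 0 < r → μ (ball x r) ≤ ENNReal.ofReal (lam x r))
    (hhalf : ∀ x r, 0 < r → lam x r ≤ Cl * lam x (r / 2)) :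
    (∀ x r₁ r₂, 0 < r₁ → r₁ ≤ r₂ →
        (⨅ z : X, lam z (r₁ + dist x z)) ≤ ⨅ z : X, lam z (r₂ + dist x z)) ∧
    (∀ x r, 0 < r → μ (ball x r) ≤ ENNReal.ofReal (⨅ z : X, lam z (r + dist x z))) ∧
    (∀ x r, 0 < r →
        (⨅ z : X, lam z (r + dist x z)) ≤ Cl * ⨅ z : X, lam z (r / 2 + dist x z)) ∧
    (∀ x r, 0 < r → (⨅ z : X, lam z (r + dist x z)) ≤ lam x r) ∧
    (∀ x y r, 0 < r → dist x y ≤ r →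
        (⨅ z : X, lam z (r + dist x z)) ≤ Cl * ⨅ z : X, lam z (r + dist y z)) := by
  have hCl x : 0 ≤ Cl := (const_pos_of_halving hpos hhalf x).le
  refine ⟨fun x _ _ hr₁ hr => regularize_mono hpos hmono hr₁ hr,
    fun x r hr => measure_ball_le_ofReal_regularize hpos hmeas hr,
    fun x r hr => regularize_le_mul_regularize hpos (hCl x) hr fun z => ?_,
    fun x r hr => regularize_le_self hpos hr,
    fun x y r hr hxy => regularize_le_mul_regularize hpos (hCl x) hr fun z => ?_⟩
  · exact le_mul_of_le_two_mul hmono hhalf z (by positivity)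
      (by linarith [dist_nonneg (x := x) (y := z)])
  · exact le_mul_of_le_two_mul hmono hhalf z (by positivity)
      (by linarith [dist_triangle x y z, dist_nonneg (x := y) (y := z)])

open MeasureTheory Metric Set ENNReal in
/-- Regularization of a dominating function: `λ̃(x,r) = inf_z λ(z, r + d(x,z))` is again
a dominating function with the same constant, is dominated by `λ`, and satisfies
`λ̃(x,r) ≤ C_λ λ̃(y,r)` whenever `d(x,y) ≤ r`. -/
theorem dominating_function_regularization
    {X : Type*} [MetricSpace X] [MeasurableSpace X] [BorelSpace X] [Nonempty X]
    (μ : Measure X) [IsLocallyFiniteMeasure μ]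
    (lam : X → ℝ → ℝ) (Cl : ℝ) (hCl : 1 < Cl)
    (hpos : ∀ x r, 0 < r → 0 < lam x r)
    (hmono : ∀ x r₁ r₂, 0 < r₁ → r₁ ≤ r₂ → lam x r₁ ≤ lam x r₂)
    (hmeas : ∀ x r, 0 < r → μ (ball x r) ≤ ENNReal.ofReal (lam x r))
    (hhalf : ∀ x r, 0 < r → lam x r ≤ Cl * lam x (r / 2)) :
    (∀ x r₁ r₂, 0 < r₁ → r₁ ≤ r₂ →
        (⨅ z : X, lam z (r₁ + dist x z)) ≤ ⨅ z : X, lam z (r₂ + dist x z)) ∧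
    (∀ x r, 0 < r → μ (ball x r) ≤ ENNReal.ofReal (⨅ z : X, lam z (r + dist x z))) ∧
    (∀ x r, 0 < r →
        (⨅ z : X, lam z (r + dist x z)) ≤ Cl * ⨅ z : X, lam z (r / 2 + dist x z)) ∧
    (∀ x r, 0 < r → (⨅ z : X, lam z (r + dist x z)) ≤ lam x r) ∧
    (∀ x y r, 0 < r → dist x y ≤ r →
        (⨅ z : X, lam z (r + dist x z)) ≤ Cl * ⨅ z : X, lam z (r + dist y z)) :=
  dominating_function_regularization_general μ lam Cl hpos hmono hmeas hhalf
end

section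
/- Let (X,d,μ) be upper doubling with dominating function λ and constant C_λ, and let K be a Calderón–Zygmund kernel on X with constant C_K and Dini modulus ω. Then there is a constant C depending only on C_λ such that for every ball B(z,r), all points x, x' ∈ B(z, 28r), and every f ∈ L¹_loc(μ): |∫_{X∖B(z,30r)} (K(x,y) − K(x',y)) f(y) dμ(y)| ≤ C·‖ω‖_Dini·M_λ f(x), where M_λ f(x) := sup_{R>0} λ(x,R)^{−1} ∫_{B(x,R)} |f| dμ. -/
open MeasureTheory Metric Set ENNReal

/-!
Split `X ∖ B(z, 30r)` at distance `3 d(x, x')` from `x`. On the near part every point is at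
distance at least `2r` from both `x` and `x'`, and the near part lies in `B(x, 2⁷ · 2r)`, so the
size bound together with eight applications of the doubling of `λ` controls the integral by
`C_K C_λ⁸ M_λ f(x)`; as `‖ω‖_Dini > 0` this is a multiple of `‖ω‖_Dini M_λ f(x)`. On the far
part, on the dyadic annulus `2ʲ ρ ≤ d(x, y) < 2ʲ⁺¹ ρ` with `ρ = 3 d(x, x')`, the smoothness of
`K` gives `|K(x,y) - K(x',y)| ≤ ω(2⁻ʲ) / λ(x, 2ʲ ρ) ≤ C_λ ω(2⁻ʲ) / λ(x, 2ʲ⁺¹ ρ)`, so the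
annulus contributes at most `C_λ ω(2⁻ʲ) M_λ f(x)`; summing over `j` gives
`C_λ ‖ω‖_Dini M_λ f(x)`.
-/

section

variable {X : Type*} [MetricSpace X] [MeasurableSpace X]
  {μ : Measure X} {lam : X → ℝ → ℝ} {Cl : ℝ}

namespace IsUpperDoubling

theorem const_pos (hud : IsUpperDoubling μ lam Cl) : 0 < Cl := one_pos.trans hud.one_lt

theorem lam_two_pow_mul_le (hud : IsUpperDoubling μ lam Cl) (x : X) {s : ℝ} (hs : 0 < s) :
    ∀ n : ℕ, lam x (2 ^ n * s) ≤ Cl ^ n * lam x s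
  | 0 => by simp
  | n + 1 => calc
      lam x (2 ^ (n + 1) * s) ≤ Cl * lam x (2 ^ n * s) := by
        have h := hud.halving x (2 ^ (n + 1) * s) (by positivity)
        rwa [show 2 ^ (n + 1) * s / 2 = 2 ^ n * s by ring] at h
      _ ≤ Cl * (Cl ^ n * lam x s) :=
        mul_le_mul_of_nonneg_left (hud.lam_two_pow_mul_le x hs n) hud.const_pos.le
      _ = Cl ^ (n + 1) * lam x s := by ring

theorem lam_two_pow_mul_le_of_dist_le (hud : IsUpperDoubling μ lam Cl) {x x₀ : X} {s : ℝ}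
    (hs : 0 < s) {n : ℕ} (hx : dist x x₀ ≤ 2 ^ n * s) :
    lam x (2 ^ n * s) ≤ Cl ^ (n + 1) * lam x₀ s := calc
  lam x (2 ^ n * s) ≤ Cl * lam x₀ (2 ^ n * s) := hud.close x x₀ _ (by positivity) hx
  _ ≤ Cl * (Cl ^ n * lam x₀ s) :=
    mul_le_mul_of_nonneg_left (hud.lam_two_pow_mul_le x₀ hs n) hud.const_pos.le
  _ = Cl ^ (n + 1) * lam x₀ s := by ring

end IsUpperDoubling

theorem setLIntegral_enorm_mul_le_Mlam {f g : X → ℂ} {x : X} {A : Set X} {R a : ℝ}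
    (hA : MeasurableSet A) (hAR : A ⊆ ball x R) (hR : 0 < R) (hl : 0 < lam x R)
    (hg : ∀ y ∈ A, ‖g y‖ ≤ a / lam x R) :
    ∫⁻ y in A, ‖g y * f y‖ₑ ∂μ ≤ ENNReal.ofReal a * Mlam μ lam f x := calc
  ∫⁻ y in A, ‖g y * f y‖ₑ ∂μ ≤ ∫⁻ y in A, ENNReal.ofReal (a / lam x R) * ‖f y‖ₑ ∂μ := by
    refine setLIntegral_mono' hA fun y hy => ?_
    rw [enorm_mul, ← ofReal_norm (g y)]
    gcongr
    exact hg y hy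
  _ ≤ ENNReal.ofReal a * ((∫⁻ y in ball x R, ‖f y‖ₑ ∂μ) / ENNReal.ofReal (lam x R)) := by
    rw [lintegral_const_mul' _ _ ofReal_ne_top, ENNReal.ofReal_div_of_pos hl, div_eq_mul_inv,
      div_eq_mul_inv, mul_assoc, mul_comm (ENNReal.ofReal (lam x R))⁻¹]
    gcongr
  _ ≤ ENNReal.ofReal a * Mlam μ lam f x := by
    gcongr
    exact le_iSup₂ (f := fun R (_ : 0 < R) =>
      (∫⁻ y in ball x R, ‖f y‖ₑ ∂μ) / ENNReal.ofReal (lam x R)) R hR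

theorem lintegral_compl_ball_le_of_dyadic [BorelSpace X] (hud : IsUpperDoubling μ lam Cl)
    {f g : X → ℂ} {x : X} {ρ : ℝ} (hρ : 0 < ρ) {a : ℕ → ℝ} (ha : ∀ j, 0 ≤ a j)
    (hg : ∀ (j : ℕ) y, 2 ^ j * ρ ≤ dist y x → dist y x < 2 ^ (j + 1) * ρ →
      ‖g y‖ ≤ a j / lam x (2 ^ j * ρ)) :
    ∫⁻ y in (ball x ρ)ᶜ, ‖g y * f y‖ₑ ∂μ ≤
      (∑' j, ENNReal.ofReal (Cl * a j)) * Mlam μ lam f x := by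
  set annulus : ℕ → Set X := fun j => ball x (2 ^ (j + 1) * ρ) \ ball x (2 ^ j * ρ)
  have hcover : (ball x ρ)ᶜ ⊆ ⋃ j, annulus j := by
    intro y hy
    have hρy : 1 ≤ dist y x / ρ := (one_le_div hρ).mpr (not_lt.mp hy)
    obtain ⟨j, hj, hj'⟩ := exists_nat_pow_near hρy one_lt_two
    exact mem_iUnion.mpr ⟨j, mem_ball.mpr ((div_lt_iff₀ hρ).mp hj'),
      fun h => (mem_ball.mp h).not_ge ((le_div_iff₀ hρ).mp hj)⟩
  have hannulus : ∀ j, ∫⁻ y in annulus j, ‖g y * f y‖ₑ ∂μ ≤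
      ENNReal.ofReal (Cl * a j) * Mlam μ lam f x := by
    intro j
    have hr : 0 < 2 ^ j * ρ := by positivity
    have hlam : lam x (2 ^ (j + 1) * ρ) ≤ Cl * lam x (2 ^ j * ρ) := by
      have h := hud.lam_two_pow_mul_le x hr 1
      rwa [pow_one, pow_one, ← mul_assoc, ← pow_succ'] at h
    refine setLIntegral_enorm_mul_le_Mlam (measurableSet_ball.diff measurableSet_ball)
      sdiff_subset (by positivity) (hud.lam_pos _ _ (by positivity)) fun y ⟨hy, hy'⟩ => ?_
    calc ‖g y‖ ≤ a j / lam x (2 ^ j * ρ) := hg j y (not_lt.mp hy') (mem_ball.mp hy)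
      _ = Cl * a j / (Cl * lam x (2 ^ j * ρ)) := by
        rw [mul_div_mul_left _ _ hud.const_pos.ne']
      _ ≤ Cl * a j / lam x (2 ^ (j + 1) * ρ) :=
        div_le_div_of_nonneg_left (mul_nonneg hud.const_pos.le (ha j))
          (hud.lam_pos _ _ (by positivity)) hlam
  calc ∫⁻ y in (ball x ρ)ᶜ, ‖g y * f y‖ₑ ∂μ
      ≤ ∑' j, ∫⁻ y in annulus j, ‖g y * f y‖ₑ ∂μ :=
        (lintegral_mono_set hcover).trans (lintegral_iUnion_le _ _)
    _ ≤ ∑' j, ENNReal.ofReal (Cl * a j) * Mlam μ lam f x := ENNReal.tsum_le_tsum hannulus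
    _ = (∑' j, ENNReal.ofReal (Cl * a j)) * Mlam μ lam f x := ENNReal.tsum_mul_right

namespace IsCZKernel

variable {K : X → X → ℂ} {CK : ℝ} {ω : ℝ → ℝ}

theorem norm_le_of_dist_le (hud : IsUpperDoubling μ lam Cl) (hK : IsCZKernel lam K CK ω)
    {x x₀ y : X} {s : ℝ} {n : ℕ} (hs : 0 < s) (hsy : s ≤ dist x₀ y)
    (hx : dist x x₀ ≤ 2 ^ n * s) :
    ‖K x₀ y‖ ≤ max CK 0 * Cl ^ (n + 1) / lam x (2 ^ n * s) := by
  have hCl := hud.const_pos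
  have hl₀ : 0 < lam x₀ s := hud.lam_pos _ _ hs
  calc ‖K x₀ y‖ ≤ CK / lam x₀ (dist x₀ y) := hK.size _ _ (dist_pos.mp (hs.trans_le hsy))
    _ ≤ max CK 0 / lam x₀ s :=
      div_le_div₀ (le_max_right _ _) (le_max_left _ _) hl₀ (hud.lam_mono _ _ _ hs hsy)
    _ = max CK 0 * Cl ^ (n + 1) / (Cl ^ (n + 1) * lam x₀ s) := by
      rw [mul_comm (Cl ^ (n + 1)), mul_div_mul_right _ _ (by positivity)]
    _ ≤ max CK 0 * Cl ^ (n + 1) / lam x (2 ^ n * s) :=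
      div_le_div_of_nonneg_left (by positivity) (hud.lam_pos _ _ (by positivity))
        (hud.lam_two_pow_mul_le_of_dist_le hs hx)

theorem norm_sub_le_of_two_mul_dist_lt (hud : IsUpperDoubling μ lam Cl) (hω : IsDiniModulus ω)
    (hK : IsCZKernel lam K CK ω) {x x' y : X} {s t : ℝ} (hs : 0 < s) (hsy : s ≤ dist x y)
    (hlt : 2 * dist x x' < dist x y) (ht : dist x x' ≤ t * dist x y) :
    ‖K x y - K x' y‖ ≤ ω t / lam x s := by
  have hxy : 0 < dist x y := hs.trans_le hsy
  have hratio : dist x x' / dist x y ≤ t := (div_le_iff₀ hxy).mpr ht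
  have ht0 : 0 ≤ t := (div_nonneg dist_nonneg hxy.le).trans hratio
  calc ‖K x y - K x' y‖ ≤ ω (dist x x' / dist x y) / lam x (dist x y) :=
        (le_add_of_nonneg_right (norm_nonneg _)).trans
          (hK.smooth x x' y (dist_pos.mp hxy) (by linarith))
    _ ≤ ω t / lam x s :=
        div_le_div₀ (hω.nonneg t ht0) (hω.mono (div_nonneg dist_nonneg hxy.le) ht0 hratio)
          (hud.lam_pos _ _ hs) (hud.lam_mono _ _ _ hs hsy)

theorem lintegral_sub_mul_le_near [BorelSpace X] (hud : IsUpperDoubling μ lam Cl)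
    (hK : IsCZKernel lam K CK ω) {z x x' : X} {r : ℝ} (hr : 0 < r)
    (hx : x ∈ ball z (28 * r)) (hx' : x' ∈ ball z (28 * r)) (f : X → ℂ) :
    ∫⁻ y in (ball z (30 * r))ᶜ ∩ ball x (3 * dist x x'), ‖(K x y - K x' y) * f y‖ₑ ∂μ ≤
      ENNReal.ofReal (2 * max CK 0 * Cl ^ 8) * Mlam μ lam f x := by
  rw [mem_ball] at hx hx'
  -- `x` and `x'` are `56 r`-close, so the near region lies in `B(x, 2 ^ 7 * 2 r)`.
  have hxx' : dist x x' < 56 * r := by linarith [dist_triangle_right x x' z]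
  have hsep : ∀ x₀, dist x₀ z < 28 * r → ∀ y ∉ ball z (30 * r), 2 * r ≤ dist x₀ y :=
    fun x₀ hx₀ y hy => by linarith [dist_triangle_left y z x₀, not_lt.mp (mt mem_ball.mpr hy)]
  refine setLIntegral_enorm_mul_le_Mlam (R := 2 ^ 7 * (2 * r))
    (measurableSet_ball.compl.inter measurableSet_ball)
    (inter_subset_right.trans (ball_subset_ball (by linarith))) (by positivity)
    (hud.lam_pos _ _ (by positivity)) fun y ⟨hy, _⟩ => ?_
  have hnorm : ∀ x₀, dist x₀ z < 28 * r → dist x x₀ ≤ 2 ^ 7 * (2 * r) →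
      ‖K x₀ y‖ ≤ max CK 0 * Cl ^ 8 / lam x (2 ^ 7 * (2 * r)) :=
    fun x₀ hx₀ => hK.norm_le_of_dist_le hud (by positivity) (hsep x₀ hx₀ y hy)
  calc ‖K x y - K x' y‖ ≤ ‖K x y‖ + ‖K x' y‖ := norm_sub_le _ _
    _ ≤ max CK 0 * Cl ^ 8 / lam x (2 ^ 7 * (2 * r)) +
        max CK 0 * Cl ^ 8 / lam x (2 ^ 7 * (2 * r)) :=
      add_le_add (hnorm x hx (by rw [dist_self]; positivity)) (hnorm x' hx' (by linarith))
    _ = 2 * max CK 0 * Cl ^ 8 / lam x (2 ^ 7 * (2 * r)) := by ring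

theorem lintegral_sub_mul_le_far [BorelSpace X] (hud : IsUpperDoubling μ lam Cl)
    (hω : IsDiniModulus ω) (hK : IsCZKernel lam K CK ω) {x x' : X} (hxx' : x ≠ x')
    (f : X → ℂ) :
    ∫⁻ y in (ball x (3 * dist x x'))ᶜ, ‖(K x y - K x' y) * f y‖ₑ ∂μ ≤
      ENNReal.ofReal (Cl * diniNorm ω) * Mlam μ lam f x := by
  have hd : 0 < dist x x' := dist_pos.mpr hxx'
  have hωj : ∀ j : ℕ, 0 ≤ ω ((2 : ℝ) ^ (-(j : ℤ))) := fun j => hω.nonneg _ (by positivity)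
  calc _ ≤ (∑' j : ℕ, ENNReal.ofReal (Cl * ω ((2 : ℝ) ^ (-(j : ℤ))))) * Mlam μ lam f x :=
        lintegral_compl_ball_le_of_dyadic hud (by positivity) hωj fun j y hj _ => ?_
    _ = ENNReal.ofReal (Cl * diniNorm ω) * Mlam μ lam f x := by
      rw [← ENNReal.ofReal_tsum_of_nonneg (fun j => mul_nonneg hud.const_pos.le (hωj j))
        (hω.summable.mul_left Cl), tsum_mul_left, diniNorm]
  rw [dist_comm y x] at hj
  have h2j : (1 : ℝ) ≤ 2 ^ j := one_le_pow₀ one_le_two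
  refine hK.norm_sub_le_of_two_mul_dist_lt hud hω (by positivity) hj (by nlinarith) ?_
  rw [zpow_neg, zpow_natCast, inv_mul_eq_div, le_div_iff₀ (by positivity)]
  nlinarith

end IsCZKernel

theorem IsDiniModulus.diniNorm_pos {ω : ℝ → ℝ} (hω : IsDiniModulus ω) : 0 < diniNorm ω :=
  (hω.pos _ (by positivity)).trans_le
    (hω.summable.le_tsum 0 fun j _ => hω.nonneg _ (by positivity))

end

open MeasureTheory Metric Set ENNReal in
theorem kernel_difference_estimate_general
    {X : Type*} [MetricSpace X] [MeasurableSpace X] [BorelSpace X]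
    (μ : Measure X)
    (lam : X → ℝ → ℝ) (Cl : ℝ) (hud : IsUpperDoubling μ lam Cl)
    (ω : ℝ → ℝ) (hω : IsDiniModulus ω)
    (K : X → X → ℂ) (CK : ℝ) (hK : IsCZKernel lam K CK ω) :
    ∃ C : ℝ, 0 < C ∧
      ∀ (z : X) (r : ℝ), 0 < r →
        ∀ x ∈ ball z (28 * r), ∀ x' ∈ ball z (28 * r),
          ∀ f : X → ℂ, (∀ (c : X) (R : ℝ), IntegrableOn f (ball c R) μ) →
            ENNReal.ofReal ‖∫ y in (ball z (30 * r))ᶜ, (K x y - K x' y) * f y ∂μ‖ ≤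
              ENNReal.ofReal (C * diniNorm ω) * Mlam μ lam f x := by
  have hD := hω.diniNorm_pos
  have hCl := hud.const_pos
  refine ⟨2 * max CK 0 * Cl ^ 8 / diniNorm ω + Cl, by positivity, ?_⟩
  intro z r hr x hx x' hx' f _
  rcases eq_or_ne x x' with rfl | hxx'
  · simp
  set B := ball x (3 * dist x x')
  calc ENNReal.ofReal ‖∫ y in (ball z (30 * r))ᶜ, (K x y - K x' y) * f y ∂μ‖
      ≤ ∫⁻ y in (ball z (30 * r))ᶜ, ‖(K x y - K x' y) * f y‖ₑ ∂μ := by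
        rw [ofReal_norm]
        exact enorm_integral_le_lintegral_enorm _
    _ ≤ (∫⁻ y in (ball z (30 * r))ᶜ ∩ B, ‖(K x y - K x' y) * f y‖ₑ ∂μ) +
          ∫⁻ y in Bᶜ, ‖(K x y - K x' y) * f y‖ₑ ∂μ :=
        (lintegral_mono_set fun y hy => (em (y ∈ B)).imp (⟨hy, ·⟩) id).trans
          (lintegral_union_le _ _ _)
    _ ≤ ENNReal.ofReal (2 * max CK 0 * Cl ^ 8) * Mlam μ lam f x +
          ENNReal.ofReal (Cl * diniNorm ω) * Mlam μ lam f x :=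
        add_le_add (hK.lintegral_sub_mul_le_near hud hr hx hx' f)
          (hK.lintegral_sub_mul_le_far hud hω hxx' f)
    _ = ENNReal.ofReal ((2 * max CK 0 * Cl ^ 8 / diniNorm ω + Cl) * diniNorm ω) *
          Mlam μ lam f x := by
        rw [← add_mul, ← ofReal_add (by positivity) (by positivity)]
        field_simp

open MeasureTheory Metric Set ENNReal in
/-- Smoothness estimate: the difference of the kernel at two nearby points, integrated
against `f` outside an enlarged ball, is controlled by `‖ω‖_Dini · M_λ f(x)`. -/
theorem kernel_difference_estimate
    {X : Type*} [MetricSpace X] [MeasurableSpace X] [BorelSpace X]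
    (μ : Measure X) [IsLocallyFiniteMeasure μ]
    (lam : X → ℝ → ℝ) (Cl : ℝ) (hud : IsUpperDoubling μ lam Cl)
    (ω : ℝ → ℝ) (hω : IsDiniModulus ω)
    (K : X → X → ℂ) (CK : ℝ) (hK : IsCZKernel lam K CK ω) :
    ∃ C : ℝ, 0 < C ∧
      ∀ (z : X) (r : ℝ), 0 < r →
        ∀ x ∈ ball z (28 * r), ∀ x' ∈ ball z (28 * r),
          ∀ f : X → ℂ, (∀ (c : X) (R : ℝ), IntegrableOn f (ball c R) μ) →
            ENNReal.ofReal ‖∫ y in (ball z (30 * r))ᶜ, (K x y - K x' y) * f y ∂μ‖ ≤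
              ENNReal.ofReal (C * diniNorm ω) * Mlam μ lam f x :=
  kernel_difference_estimate_general μ lam Cl hud ω hω K CK hK
end

section
/- Let (X,d,μ) be upper doubling with dominating function λ and constant C_λ, and let K: X×X∖Δ → ℂ satisfy the size bound |K(x,y)| ≤ C_K/λ(x,d(x,y)). Then for all constants 0 < c₁ ≤ c₂ there is a constant C depending only on C_K, C_λ, c₁, c₂ such that for every ball B(z,r), every x ∈ B(z,28r), every ρ with c₁·r ≤ ρ ≤ c₂·r, and every f ∈ L¹_loc(μ): |∫_{d(x,y)>ρ} K(x,y) f(y) dμ(y) − ∫_{X∖B(z,30r)} K(x,y) f(y) dμ(y)| ≤ C·M_λ f(x), where M_λ f(x) := sup_{R>0} λ(x,R)^{−1} ∫_{B(x,R)} |f| dμ (assuming both integrals converge absolutely). -/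
open MeasureTheory Metric Set ENNReal

/-! The two truncations differ only on the symmetric difference of their domains. For
`x ∈ B(z, 28r)` and `c₁ r ≤ ρ ≤ c₂ r` it lies in an annulus `s ≤ d(x,y) < t` with `s, t`
comparable to `r`; there `|K(x,y)| ≤ C_K / λ(x,s)`, and halving the radius `N` times, with
`2^N s ≥ t`, gives `λ(x,t) ≤ C_λ^N λ(x,s)`. Hence the difference is at most
`2 C_K C_λ^N λ(x,t)⁻¹ ∫_{B(x,t)} |f| ≤ 2 C_K C_λ^N M_λ f(x)`. -/

section UpperDoubling

variable {X : Type*} [MetricSpace X] [MeasurableSpace X]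
  {μ : Measure X} {lam : X → ℝ → ℝ} {Cl : ℝ}

theorem IsUpperDoubling.lam_two_pow_mul_le_s5 (hud : IsUpperDoubling μ lam Cl) (x : X) {s : ℝ}
    (hs : 0 < s) (N : ℕ) : lam x (2 ^ N * s) ≤ Cl ^ N * lam x s := by
  induction N with
  | zero => simp
  | succ n ih =>
    calc lam x (2 ^ (n + 1) * s) ≤ Cl * lam x (2 ^ (n + 1) * s / 2) :=
          hud.halving x _ (by positivity)
      _ = Cl * lam x (2 ^ n * s) := by ring_nf
      _ ≤ Cl * (Cl ^ n * lam x s) := by gcongr; linarith [hud.one_lt]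
      _ = Cl ^ (n + 1) * lam x s := by ring

theorem IsUpperDoubling.lam_le_pow_mul (hud : IsUpperDoubling μ lam Cl) (x : X) {s t : ℝ}
    {N : ℕ} (ht : 0 < t) (htN : t ≤ 2 ^ N * s) : lam x t ≤ Cl ^ N * lam x s := by
  have hs : 0 < s := pos_of_mul_pos_right (ht.trans_le htN) (by positivity)
  exact (hud.lam_mono x t _ ht htN).trans (hud.lam_two_pow_mul_le_s5 x hs N)

theorem IsUpperDoubling.setLIntegral_annulus_le_mul_Mlam [OpensMeasurableSpace X]
    (hud : IsUpperDoubling μ lam Cl)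
    {K : X → X → ℂ} {CK : ℝ} (hK : ∀ x y, x ≠ y → ‖K x y‖ ≤ CK / lam x (dist x y))
    (f : X → ℂ) (x : X) {s t : ℝ} {N : ℕ} (hs : 0 < s) (hst : s ≤ t) (htN : t ≤ 2 ^ N * s) :
    ∫⁻ y in {y | s ≤ dist x y} ∩ ball x t, ‖K x y * f y‖ₑ ∂μ ≤
      ENNReal.ofReal CK * ENNReal.ofReal Cl ^ N * Mlam μ lam f x := by
  have ht : 0 < t := hs.trans_le hst
  have hlam_s : 0 < lam x s := hud.lam_pos x s hs
  set c := ENNReal.ofReal CK / ENNReal.ofReal (lam x s)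
  have hc : c ≠ ⊤ := ENNReal.div_ne_top ofReal_ne_top (ofReal_pos.2 hlam_s).ne'
  have hmeas : MeasurableSet ({y | s ≤ dist x y} ∩ ball x t) :=
    (isClosed_le continuous_const (continuous_const.dist continuous_id)).measurableSet.inter
      measurableSet_ball
  have hpointwise : ∀ y ∈ {y | s ≤ dist x y} ∩ ball x t, ‖K x y * f y‖ₑ ≤ c * ‖f y‖ₑ := by
    rintro y ⟨hsy, -⟩
    have hxy : x ≠ y := fun h => by simp [h] at hsy; linarith
    rw [enorm_mul, ← ofReal_norm (K x y)]
    gcongr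
    calc ENNReal.ofReal ‖K x y‖ ≤ ENNReal.ofReal (CK / lam x (dist x y)) :=
          ofReal_le_ofReal (hK x y hxy)
      _ = ENNReal.ofReal CK / ENNReal.ofReal (lam x (dist x y)) :=
        ENNReal.ofReal_div_of_pos (hud.lam_pos x _ (hs.trans_le hsy))
      _ ≤ c := ENNReal.div_le_div_left (ofReal_le_ofReal (hud.lam_mono x s _ hs hsy)) _
  have hc_le : c ≤ ENNReal.ofReal CK * ENNReal.ofReal Cl ^ N / ENNReal.ofReal (lam x t) := by
    have hCl : 0 < Cl := by linarith [hud.one_lt]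
    have hlam_t : ENNReal.ofReal (lam x t) ≤ ENNReal.ofReal (lam x s) * ENNReal.ofReal Cl ^ N := by
      rw [← ofReal_pow hCl.le, ← ofReal_mul hlam_s.le, mul_comm]
      exact ofReal_le_ofReal (hud.lam_le_pow_mul x ht htN)
    calc c = ENNReal.ofReal CK * ENNReal.ofReal Cl ^ N /
          (ENNReal.ofReal (lam x s) * ENNReal.ofReal Cl ^ N) :=
          (ENNReal.mul_div_mul_right _ _ (pow_ne_zero _ (ofReal_pos.2 hCl).ne')
            (pow_ne_top ofReal_ne_top)).symm
      _ ≤ _ := ENNReal.div_le_div_left hlam_t _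
  calc ∫⁻ y in {y | s ≤ dist x y} ∩ ball x t, ‖K x y * f y‖ₑ ∂μ
      ≤ ∫⁻ y in {y | s ≤ dist x y} ∩ ball x t, c * ‖f y‖ₑ ∂μ := setLIntegral_mono' hmeas hpointwise
    _ ≤ ∫⁻ y in ball x t, c * ‖f y‖ₑ ∂μ := lintegral_mono_set inter_subset_right
    _ = c * ∫⁻ y in ball x t, ‖f y‖ₑ ∂μ := lintegral_const_mul' c _ hc
    _ ≤ ENNReal.ofReal CK * ENNReal.ofReal Cl ^ N / ENNReal.ofReal (lam x t) *
          ∫⁻ y in ball x t, ‖f y‖ₑ ∂μ := by gcongr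
    _ = ENNReal.ofReal CK * ENNReal.ofReal Cl ^ N *
          ((∫⁻ y in ball x t, ‖f y‖ₑ ∂μ) / ENNReal.ofReal (lam x t)) := by
        simp only [div_eq_mul_inv]; ring
    _ ≤ ENNReal.ofReal CK * ENNReal.ofReal Cl ^ N * Mlam μ lam f x := by
        gcongr
        exact le_iSup₂_of_le t ht le_rfl

end UpperDoubling

theorem MeasureTheory.enorm_setIntegral_sub_setIntegral_le {α E : Type*} [MeasurableSpace α]
    [NormedAddCommGroup E] [NormedSpace ℝ E] {μ : Measure α} {g : α → E} {A B : Set α}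
    (hA : MeasurableSet A) (hB : MeasurableSet B) (hgA : IntegrableOn g A μ)
    (hgB : IntegrableOn g B μ) :
    ‖(∫ y in A, g y ∂μ) - ∫ y in B, g y ∂μ‖ₑ ≤
      ∫⁻ y in A \ B, ‖g y‖ₑ ∂μ + ∫⁻ y in B \ A, ‖g y‖ₑ ∂μ := by
  rw [← integral_inter_add_sdiff hB hgA, ← integral_inter_add_sdiff hA hgB, inter_comm B A,
    add_sub_add_left_eq_sub]
  exact enorm_sub_le.trans
    (add_le_add (enorm_integral_le_lintegral_enorm _) (enorm_integral_le_lintegral_enorm _))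

section Geometry

variable {X : Type*} [MetricSpace X] {x z : X} {a b s t ρ : ℝ}

theorem compl_closedBall_diff_compl_ball_subset_annulus (hx : x ∈ ball z a) (hsρ : s ≤ ρ)
    (ht : a + b ≤ t) : (closedBall x ρ)ᶜ \ (ball z b)ᶜ ⊆ {y | s ≤ dist x y} ∩ ball x t := by
  rintro y ⟨hρy, hyz⟩
  simp only [mem_compl_iff, mem_closedBall, not_le, not_not, mem_ball] at hρy hyz hx
  refine ⟨show s ≤ dist x y by rw [dist_comm]; linarith, ?_⟩
  rw [mem_ball]
  linarith [dist_triangle y z x, dist_comm x z]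

theorem compl_ball_diff_compl_closedBall_subset_annulus (hx : x ∈ ball z a) (hs : s ≤ b - a)
    (hρt : ρ < t) : (ball z b)ᶜ \ (closedBall x ρ)ᶜ ⊆ {y | s ≤ dist x y} ∩ ball x t := by
  rintro y ⟨hyz, hρy⟩
  simp only [mem_compl_iff, mem_ball, not_lt, not_not, mem_closedBall] at hyz hρy hx
  refine ⟨show s ≤ dist x y by linarith [dist_triangle y x z, dist_comm x y], ?_⟩
  rw [mem_ball]
  linarith

end Geometry

open MeasureTheory Metric Set ENNReal in
theorem truncation_comparison_general
    {X : Type*} [MetricSpace X] [MeasurableSpace X] [BorelSpace X]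
    (μ : Measure X)
    (lam : X → ℝ → ℝ) (Cl : ℝ) (hud : IsUpperDoubling μ lam Cl)
    (K : X → X → ℂ) (CK : ℝ)
    (hK : ∀ x y, x ≠ y → ‖K x y‖ ≤ CK / lam x (dist x y))
    (c₁ c₂ : ℝ) (hc₁ : 0 < c₁) :
    ∃ C : ℝ, 0 < C ∧
      ∀ (z : X) (r : ℝ), 0 < r → ∀ x ∈ ball z (28 * r),
        ∀ ρ : ℝ, c₁ * r ≤ ρ → ρ ≤ c₂ * r →
          ∀ f : X → ℂ, (∀ (c : X) (R : ℝ), IntegrableOn f (ball c R) μ) →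
            IntegrableOn (fun y => K x y * f y) (closedBall x ρ)ᶜ μ →
            IntegrableOn (fun y => K x y * f y) (ball z (30 * r))ᶜ μ →
            ENNReal.ofReal
                ‖(∫ y in (closedBall x ρ)ᶜ, K x y * f y ∂μ) -
                  ∫ y in (ball z (30 * r))ᶜ, K x y * f y ∂μ‖ ≤
              ENNReal.ofReal C * Mlam μ lam f x := by
  have hCl : 0 < Cl := by linarith [hud.one_lt]
  obtain ⟨N, hN⟩ := pow_unbounded_of_one_lt (max (c₂ + 1) 58 / min c₁ 2) one_lt_two
  refine ⟨2 * max CK 1 * Cl ^ N, mul_pos (by positivity) (pow_pos hCl N), ?_⟩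
  intro z r hr x hx ρ hρ₁ hρ₂ f _ hA hB
  have hs : 0 < min c₁ 2 * r := by positivity
  have hsρ : min c₁ 2 * r ≤ ρ := (mul_le_mul_of_nonneg_right (min_le_left _ _) hr.le).trans hρ₁
  have hs_gap : min c₁ 2 * r ≤ 30 * r - 28 * r := by
    linarith [mul_le_mul_of_nonneg_right (min_le_right c₁ 2) hr.le]
  have hρt : ρ < max (c₂ + 1) 58 * r := by
    linarith [mul_le_mul_of_nonneg_right (le_max_left (c₂ + 1) 58) hr.le]
  have h_far : 28 * r + 30 * r ≤ max (c₂ + 1) 58 * r := by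
    linarith [mul_le_mul_of_nonneg_right (le_max_right (c₂ + 1) 58) hr.le]
  have htN : max (c₂ + 1) 58 * r ≤ 2 ^ N * (min c₁ 2 * r) := by
    rw [← mul_assoc]; gcongr; exact ((div_lt_iff₀ (by positivity)).1 hN).le
  have hann := hud.setLIntegral_annulus_le_mul_Mlam hK f x hs (hsρ.trans hρt.le) htN
  rw [ofReal_norm]
  calc _ ≤ _ := enorm_setIntegral_sub_setIntegral_le measurableSet_closedBall.compl
        measurableSet_ball.compl hA hB
    _ ≤ ENNReal.ofReal CK * ENNReal.ofReal Cl ^ N * Mlam μ lam f x +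
          ENNReal.ofReal CK * ENNReal.ofReal Cl ^ N * Mlam μ lam f x := by
        gcongr <;> refine (lintegral_mono_set ?_).trans hann
        exacts [compl_closedBall_diff_compl_ball_subset_annulus hx hsρ h_far,
          compl_ball_diff_compl_closedBall_subset_annulus hx hs_gap hρt]
    _ ≤ ENNReal.ofReal (2 * max CK 1 * Cl ^ N) * Mlam μ lam f x := by
        rw [← two_mul, ofReal_mul (by positivity), ofReal_mul (by positivity),
          ofReal_pow hCl.le, ENNReal.ofReal_ofNat, ← mul_assoc, ← mul_assoc]
        gcongr
        exact le_max_left _ _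

open MeasureTheory Metric Set ENNReal in
/-- Comparison of the `ρ`-truncation at `x` with the non-sharp truncation adapted to a
ball `B(z,r)` containing `x`: the difference is controlled by `M_λ f(x)`. -/
theorem truncation_comparison
    {X : Type*} [MetricSpace X] [MeasurableSpace X] [BorelSpace X]
    (μ : Measure X) [IsLocallyFiniteMeasure μ]
    (lam : X → ℝ → ℝ) (Cl : ℝ) (hud : IsUpperDoubling μ lam Cl)
    (K : X → X → ℂ) (CK : ℝ)
    (hK : ∀ x y, x ≠ y → ‖K x y‖ ≤ CK / lam x (dist x y))
    (c₁ c₂ : ℝ) (hc₁ : 0 < c₁) (hc₁₂ : c₁ ≤ c₂) :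
    ∃ C : ℝ, 0 < C ∧
      ∀ (z : X) (r : ℝ), 0 < r → ∀ x ∈ ball z (28 * r),
        ∀ ρ : ℝ, c₁ * r ≤ ρ → ρ ≤ c₂ * r →
          ∀ f : X → ℂ, (∀ (c : X) (R : ℝ), IntegrableOn f (ball c R) μ) →
            IntegrableOn (fun y => K x y * f y) (closedBall x ρ)ᶜ μ →
            IntegrableOn (fun y => K x y * f y) (ball z (30 * r))ᶜ μ →
            ENNReal.ofReal
                ‖(∫ y in (closedBall x ρ)ᶜ, K x y * f y ∂μ) -
                  ∫ y in (ball z (30 * r))ᶜ, K x y * f y ∂μ‖ ≤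
              ENNReal.ofReal C * Mlam μ lam f x :=
  truncation_comparison_general μ lam Cl hud K CK hK c₁ c₂ hc₁
end

section
/- Let (X,d,μ) be upper doubling with dominating function λ and constant C_λ, let D be a David–Mattila lattice with parameters C_0, A_0, and let α ≥ 200. Let l₀ be the maximal integer with 100^{l₀} ≤ C_0/α and suppose C_0^{l₀/2} > C_λ^{⌈log₂ A_0⌉}. For a cell Q ∈ D set Θ(Q) := μ(αB(Q))/λ(z_Q, α·r(Q)). Let Q_0 ⊃ Q_1 ⊃ ⋯ ⊃ Q_m be a nested chain of cells with Q_j ∈ D_{k+j} for each j (consecutive generations) such that Q_1, …, Q_m are all non-doubling (i.e. μ(100B(Q_j)) > C_0·μ(B(Q_j))). Then Θ(Q_m) ≤ C·C_0^{−m·l₀/2}·Θ(Q_0), with C depending only on α, C_0, A_0, C_λ. -/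
open MeasureTheory Metric Set ENNReal

/-!
Each non-doubling cell `Q_{j+1}` of the chain has radius exactly `A_0^{-(k+j+1)}`, so
`100^{l₀} α B(Q_{j+1}) ⊂ α B(Q_j)`. Applying the growth `μ(100 c B) ≥ C_0 μ(c B)` of a
non-doubling ball `l₀` times at each of the `m` steps gives
`μ(α B(Q_m)) ≤ C_0^{-m l₀} μ(α B(Q_0))`. On the other side the radii of `Q_0` and `Q_m` differ
by a factor at most `C_0 A_0^m ≤ 2^{⌈log₂ C_0⌉ + m ⌈log₂ A_0⌉}`, so comparing `λ` at the two
scales costs at most `C_λ^{1 + ⌈log₂ C_0⌉} (C_λ^{⌈log₂ A_0⌉})^m`, and the hypothesis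
`C_λ^{⌈log₂ A_0⌉} < C_0^{l₀/2}` leaves half of the exponential gain.
-/

theorem le_pow_natCeil_logb {b x : ℝ} (hb : 1 < b) (hx : 0 < x) :
    x ≤ b ^ ⌈Real.logb b x⌉₊ := by
  rw [← Real.rpow_natCast, ← Real.logb_le_iff_le_rpow hb hx]
  exact Nat.le_ceil _

theorem apply_le_apply_zero_of_succ_le {α : Type*} [Preorder α] {f : ℕ → α} {m : ℕ}
    (h : ∀ j < m, f (j + 1) ≤ f j) : f m ≤ f 0 := by
  induction m with
  | zero => exact le_rfl
  | succ m ih =>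
    exact (h m m.lt_succ_self).trans (ih fun j hj => h j (hj.trans m.lt_succ_self))

theorem pow_add_mul_div_pow_le {Cl C0 : ℝ} {L l N : ℕ} (hCl : 0 ≤ Cl) (hC0 : 0 < C0)
    (h : Cl ^ L ≤ C0 ^ ((l : ℝ) / 2)) (m : ℕ) :
    Cl ^ (N + m * L + 1) / C0 ^ (l * m) ≤ Cl ^ (N + 1) * C0 ^ (-((m : ℝ) * l) / 2) := by
  have hgain : C0 ^ (((m : ℝ) * l) / 2) / C0 ^ (l * m) = C0 ^ (-((m : ℝ) * l) / 2) := by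
    rw [← Real.rpow_natCast, ← Real.rpow_sub hC0]
    push_cast
    ring_nf
  calc Cl ^ (N + m * L + 1) / C0 ^ (l * m) = Cl ^ (N + 1) * (Cl ^ L) ^ m / C0 ^ (l * m) := by
        rw [← pow_mul, ← pow_add]
        ring_nf
    _ ≤ Cl ^ (N + 1) * (C0 ^ ((l : ℝ) / 2)) ^ m / C0 ^ (l * m) := by gcongr
    _ = Cl ^ (N + 1) * C0 ^ (-((m : ℝ) * l) / 2) := by
        rw [← hgain, ← Real.rpow_natCast (C0 ^ _) m, ← Real.rpow_mul hC0.le]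
        ring_nf

section UpperDoubling

variable {X : Type*} [MetricSpace X] [MeasurableSpace X]
  {μ : Measure X} {lam : X → ℝ → ℝ} {Cl : ℝ}

theorem IsUpperDoubling.lam_le_pow_mul_lam_div (hud : IsUpperDoubling μ lam Cl) (x : X) (n : ℕ)
    {r : ℝ} (hr : 0 < r) : lam x r ≤ Cl ^ n * lam x (r / 2 ^ n) := by
  induction n with
  | zero => simp
  | succ n ih =>
    calc lam x r ≤ Cl ^ n * lam x (r / 2 ^ n) := ih
      _ ≤ Cl ^ n * (Cl * lam x (r / 2 ^ n / 2)) := by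
          gcongr
          · exact pow_nonneg (zero_le_one.trans hud.one_lt.le) n
          · exact hud.halving x _ (by positivity)
      _ = Cl ^ (n + 1) * lam x (r / 2 ^ (n + 1)) := by rw [div_div, ← pow_succ]; ring

theorem IsUpperDoubling.lam_le_pow_mul_lam_of_le (hud : IsUpperDoubling μ lam Cl) {x y : X}
    {r s : ℝ} {n : ℕ} (hr : 0 < r) (hxy : dist x y ≤ r) (hrs : r ≤ 2 ^ n * s) :
    lam x r ≤ Cl ^ (n + 1) * lam y s := by
  have hCl : 0 ≤ Cl := zero_le_one.trans hud.one_lt.le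
  calc lam x r ≤ Cl * lam y r := hud.close x y r hr hxy
    _ ≤ Cl * (Cl ^ n * lam y (r / 2 ^ n)) := by gcongr; exact hud.lam_le_pow_mul_lam_div y n hr
    _ ≤ Cl * (Cl ^ n * lam y s) := by
        gcongr
        exact hud.lam_mono y _ _ (by positivity) ((div_le_iff₀' (by positivity)).2 hrs)
    _ = Cl ^ (n + 1) * lam y s := by ring

end UpperDoubling

section Balls

variable {X : Type*} [MetricSpace X] [MeasurableSpace X] {μ : Measure X}

theorem ofReal_pow_mul_measure_ball_le {C0 α r : ℝ} {z : X}
    (hgrowth : ∀ c : ℝ, 1 ≤ c → c ≤ C0 →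
      ENNReal.ofReal C0 * μ (ball z (c * r)) ≤ μ (ball z (100 * c * r)))
    (hα : 1 ≤ α) {n : ℕ} (hn : 100 ^ n * α ≤ 100 * C0) :
    ENNReal.ofReal C0 ^ n * μ (ball z (α * r)) ≤ μ (ball z (100 ^ n * α * r)) := by
  induction n with
  | zero => simp
  | succ n ih =>
    have hc : 1 ≤ (100 : ℝ) ^ n * α :=
      one_le_mul_of_one_le_of_one_le (one_le_pow₀ (by norm_num)) hα
    have hcC0 : (100 : ℝ) ^ n * α ≤ C0 := by rw [pow_succ] at hn; linarith
    calc ENNReal.ofReal C0 ^ (n + 1) * μ (ball z (α * r))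
        = ENNReal.ofReal C0 * (ENNReal.ofReal C0 ^ n * μ (ball z (α * r))) := by ring
      _ ≤ ENNReal.ofReal C0 * μ (ball z (100 ^ n * α * r)) := by gcongr; exact ih (by linarith)
      _ ≤ μ (ball z (100 * (100 ^ n * α) * r)) := hgrowth _ hc hcC0
      _ = μ (ball z (100 ^ (n + 1) * α * r)) := by ring_nf

theorem theta_le_ofReal_div_mul_theta {lam : X → ℝ → ℝ} {α c K r r' : ℝ} {z z' : X}
    (hc : 0 < c) (hK : 0 ≤ K) (hlam : 0 < lam z (α * r))
    (hμ : ENNReal.ofReal c * μ (ball z' (α * r')) ≤ μ (ball z (α * r)))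
    (hlamK : lam z (α * r) ≤ K * lam z' (α * r')) :
    theta μ lam α z' r' ≤ ENNReal.ofReal (K / c) * theta μ lam α z r := by
  unfold theta
  apply ENNReal.div_le_of_le_mul
  set a := μ (ball z (α * r))
  set b := ENNReal.ofReal (lam z (α * r))
  set b' := ENNReal.ofReal (lam z' (α * r'))
  have hb : b ≠ 0 := (ENNReal.ofReal_pos.2 hlam).ne'
  calc μ (ball z' (α * r')) ≤ a / ENNReal.ofReal c :=
        (ENNReal.le_div_iff_mul_le (Or.inl (ENNReal.ofReal_pos.2 hc).ne')
          (Or.inl ENNReal.ofReal_ne_top)).2 (by rwa [mul_comm])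
    _ = a / ENNReal.ofReal c * (b / b) := by
        rw [ENNReal.div_self hb ENNReal.ofReal_ne_top, mul_one]
    _ ≤ a / ENNReal.ofReal c * (ENNReal.ofReal K * b' / b) := by
        gcongr
        rw [← ENNReal.ofReal_mul hK]
        exact ENNReal.ofReal_le_ofReal hlamK
    _ = ENNReal.ofReal (K / c) * (a / b) * b' := by
        rw [ENNReal.ofReal_div_of_pos hc]
        simp only [div_eq_mul_inv]
        ring

end Balls

namespace DavidMattila

variable {X : Type*} [MetricSpace X] [MeasurableSpace X] {μ : Measure X}
  {C0 A0 : ℝ} (D : DavidMattila μ C0 A0) {k : ℕ} {Q : Set X}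

theorem radius_pos (hA0 : 0 < A0) (hQ : Q ∈ D.cells k) : 0 < D.radius k Q :=
  (zpow_pos hA0 _).trans_le (D.radius_lb k Q hQ)

theorem center_mem_cell (hA0 : 0 < A0) (hQ : Q ∈ D.cells k) : D.center k Q ∈ Q :=
  D.ball_subset k Q hQ ⟨D.center_mem k Q hQ, mem_ball_self (D.radius_pos hA0 hQ)⟩

theorem dist_center_lt_of_subset (hA0 : 0 < A0) (hQ : Q ∈ D.cells k) {l : ℕ} {Q' : Set X}
    (hQ' : Q' ∈ D.cells l) (hsub : Q' ⊆ Q) :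
    dist (D.center l Q') (D.center k Q) < 28 * D.radius k Q :=
  (D.subset_ball k Q hQ (hsub (D.center_mem_cell hA0 hQ'))).2

theorem radius_le_two_pow_mul_radius (hC0 : 0 < C0) (hA0 : 0 < A0) (hQ : Q ∈ D.cells k)
    {m : ℕ} {Q' : Set X} (hQ' : Q' ∈ D.cells (k + m)) :
    D.radius k Q ≤ 2 ^ (⌈Real.logb 2 C0⌉₊ + m * ⌈Real.logb 2 A0⌉₊) * D.radius (k + m) Q' := by
  have hsplit : A0 ^ (-(k : ℤ)) = A0 ^ m * A0 ^ (-((k + m : ℕ) : ℤ)) := by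
    rw [← zpow_natCast, ← zpow_add₀ hA0.ne']
    push_cast
    ring_nf
  calc D.radius k Q ≤ C0 * A0 ^ (-(k : ℤ)) := D.radius_ub k Q hQ
    _ = C0 * A0 ^ m * A0 ^ (-((k + m : ℕ) : ℤ)) := by rw [hsplit, mul_assoc]
    _ ≤ 2 ^ ⌈Real.logb 2 C0⌉₊ * (2 ^ ⌈Real.logb 2 A0⌉₊) ^ m * D.radius (k + m) Q' := by
        gcongr
        · exact le_pow_natCeil_logb one_lt_two hC0
        · exact le_pow_natCeil_logb one_lt_two hA0
        · exact D.radius_lb _ _ hQ'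
    _ = 2 ^ (⌈Real.logb 2 C0⌉₊ + m * ⌈Real.logb 2 A0⌉₊) * D.radius (k + m) Q' := by
        rw [pow_add, ← pow_mul, mul_comm m]

theorem ofReal_pow_mul_measure_ball_le_of_nondoubling {α : ℝ} {l : ℕ} (hα : 29 ≤ α)
    (hαC0 : 100 ^ l * α ≤ C0) (hCA : C0 ≤ A0) (hQ : Q ∈ D.cells k) {Q' : Set X}
    (hQ' : Q' ∈ D.cells (k + 1)) (hsub : Q' ⊆ Q)
    (hnd : ENNReal.ofReal C0 * μ (ball (D.center (k + 1) Q') (D.radius (k + 1) Q')) <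
      μ (ball (D.center (k + 1) Q') (100 * D.radius (k + 1) Q'))) :
    ENNReal.ofReal C0 ^ l * μ (ball (D.center (k + 1) Q') (α * D.radius (k + 1) Q')) ≤
      μ (ball (D.center k Q) (α * D.radius k Q)) := by
  have h100 : (1 : ℝ) ≤ 100 ^ l := one_le_pow₀ (by norm_num)
  have hA0 : 0 < A0 := by nlinarith
  obtain ⟨hr', hgrowth⟩ := D.nondoubling _ _ hQ' hnd
  have hsmall : 100 ^ l * α * D.radius (k + 1) Q' ≤ D.radius k Q :=
    calc 100 ^ l * α * D.radius (k + 1) Q' ≤ C0 * A0 ^ (-((k + 1 : ℕ) : ℤ)) := by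
          rw [hr']; gcongr
      _ ≤ A0 * A0 ^ (-((k + 1 : ℕ) : ℤ)) := by gcongr
      _ = A0 ^ (-(k : ℤ)) := by rw [← zpow_one_add₀ hA0.ne']; push_cast; ring_nf
      _ ≤ D.radius k Q := D.radius_lb k Q hQ
  have hdist := D.dist_center_lt_of_subset hA0 hQ hQ' hsub
  have hαr : 29 * D.radius k Q ≤ α * D.radius k Q := by
    gcongr; exact (D.radius_pos hA0 hQ).le
  calc ENNReal.ofReal C0 ^ l * μ (ball (D.center (k + 1) Q') (α * D.radius (k + 1) Q'))
      ≤ μ (ball (D.center (k + 1) Q') (100 ^ l * α * D.radius (k + 1) Q')) :=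
        ofReal_pow_mul_measure_ball_le hgrowth (by linarith) (by nlinarith)
    _ ≤ μ (ball (D.center k Q) (α * D.radius k Q)) :=
        measure_mono (ball_subset_ball' (by linarith))

theorem ofReal_pow_mul_measure_ball_le_of_chain {α : ℝ} {l : ℕ} (hα : 29 ≤ α)
    (hαC0 : 100 ^ l * α ≤ C0) (hCA : C0 ≤ A0) {m : ℕ} {Q : ℕ → Set X}
    (hQ : ∀ j ≤ m, Q j ∈ D.cells (k + j)) (hsub : ∀ j < m, Q (j + 1) ⊆ Q j)
    (hnd : ∀ j, 1 ≤ j → j ≤ m →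
      ENNReal.ofReal C0 * μ (ball (D.center (k + j) (Q j)) (D.radius (k + j) (Q j))) <
        μ (ball (D.center (k + j) (Q j)) (100 * D.radius (k + j) (Q j)))) :
    ENNReal.ofReal C0 ^ (l * m) *
        μ (ball (D.center (k + m) (Q m)) (α * D.radius (k + m) (Q m))) ≤
      μ (ball (D.center k (Q 0)) (α * D.radius k (Q 0))) := by
  induction m with
  | zero => simp
  | succ m ih =>
    calc ENNReal.ofReal C0 ^ (l * (m + 1)) *
          μ (ball (D.center (k + (m + 1)) (Q (m + 1)))
            (α * D.radius (k + (m + 1)) (Q (m + 1))))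
        = ENNReal.ofReal C0 ^ (l * m) * (ENNReal.ofReal C0 ^ l *
          μ (ball (D.center (k + m + 1) (Q (m + 1)))
            (α * D.radius (k + m + 1) (Q (m + 1))))) := by
          rw [mul_add_one, pow_add, mul_assoc, add_assoc]
      _ ≤ ENNReal.ofReal C0 ^ (l * m) *
          μ (ball (D.center (k + m) (Q m)) (α * D.radius (k + m) (Q m))) := by
          gcongr
          exact D.ofReal_pow_mul_measure_ball_le_of_nondoubling hα hαC0 hCA (hQ m (by omega))
            (hQ (m + 1) le_rfl) (hsub m m.lt_succ_self) (hnd (m + 1) (by omega) le_rfl)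
      _ ≤ μ (ball (D.center k (Q 0)) (α * D.radius k (Q 0))) :=
          ih (fun j hj => hQ j (by omega)) (fun j hj => hsub j (by omega))
            (fun j hj hjm => hnd j hj (by omega))

end DavidMattila

open MeasureTheory Metric Set ENNReal in
theorem theta_decay_nondoubling_chain_general
    {X : Type*} [MetricSpace X] [MeasurableSpace X]
    (μ : Measure X)
    (lam : X → ℝ → ℝ) (Cl : ℝ) (hud : IsUpperDoubling μ lam Cl)
    (C0 A0 : ℝ) (hA0 : 5000 * C0 < A0)
    (D : DavidMattila μ C0 A0)
    (α : ℝ) (hα : 200 ≤ α)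
    (l₀ : ℕ) (hl₀ : (100 : ℝ) ^ l₀ ≤ C0 / α)
    (hbig : Cl ^ ⌈Real.logb 2 A0⌉ < C0 ^ ((l₀ : ℝ) / 2)) :
    ∃ C : ℝ, 0 < C ∧
      ∀ (k m : ℕ) (Q : ℕ → Set X),
        (∀ j ≤ m, Q j ∈ D.cells (k + j)) →
        (∀ j < m, Q (j + 1) ⊆ Q j) →
        (∀ j, 1 ≤ j → j ≤ m →
          ENNReal.ofReal C0 *
              μ (ball (D.center (k + j) (Q j)) (D.radius (k + j) (Q j))) <
            μ (ball (D.center (k + j) (Q j)) (100 * D.radius (k + j) (Q j)))) →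
        theta μ lam α (D.center (k + m) (Q m)) (D.radius (k + m) (Q m)) ≤
          ENNReal.ofReal (C * C0 ^ (-((m : ℝ) * (l₀ : ℝ)) / 2)) *
            theta μ lam α (D.center k (Q 0)) (D.radius k (Q 0)) := by
  have hαC0 : 100 ^ l₀ * α ≤ C0 := (le_div_iff₀ (by linarith)).1 hl₀
  have hαC0' : α ≤ C0 := by nlinarith [one_le_pow₀ (M₀ := ℝ) (a := 100) (n := l₀) (by norm_num)]
  have hC0 : 0 < C0 := by linarith
  have hCA : C0 ≤ A0 := by linarith
  have hA0pos : 0 < A0 := by linarith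
  have hCl : 0 < Cl := zero_lt_one.trans hud.one_lt
  have hL : Cl ^ ⌈Real.logb 2 A0⌉₊ ≤ C0 ^ ((l₀ : ℝ) / 2) := by
    rw [← zpow_natCast, Int.natCast_ceil_eq_ceil (Real.logb_nonneg one_lt_two (by linarith))]
    exact hbig.le
  refine ⟨Cl ^ (⌈Real.logb 2 C0⌉₊ + 1), by positivity, fun k m Q hQ hsub hnd => ?_⟩
  have hQ0 : Q 0 ∈ D.cells k := hQ 0 m.zero_le
  have hQm : Q m ∈ D.cells (k + m) := hQ m le_rfl
  have hr0 := D.radius_pos hA0pos hQ0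
  have hdist : dist (D.center k (Q 0)) (D.center (k + m) (Q m)) ≤ α * D.radius k (Q 0) := by
    rw [dist_comm]
    nlinarith [D.dist_center_lt_of_subset hA0pos hQ0 hQm (apply_le_apply_zero_of_succ_le hsub)]
  have hlam := hud.lam_le_pow_mul_lam_of_le (by positivity) hdist
    (by rw [mul_left_comm]; gcongr; exact D.radius_le_two_pow_mul_radius hC0 hA0pos hQ0 hQm)
  calc theta μ lam α (D.center (k + m) (Q m)) (D.radius (k + m) (Q m))
      ≤ ENNReal.ofReal
            (Cl ^ (⌈Real.logb 2 C0⌉₊ + m * ⌈Real.logb 2 A0⌉₊ + 1) / C0 ^ (l₀ * m)) *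
          theta μ lam α (D.center k (Q 0)) (D.radius k (Q 0)) := by
        refine theta_le_ofReal_div_mul_theta (by positivity) (by positivity)
          (hud.lam_pos _ _ (by positivity)) ?_ hlam
        rw [ENNReal.ofReal_pow hC0.le]
        exact D.ofReal_pow_mul_measure_ball_le_of_chain (by linarith) hαC0 hCA hQ hsub hnd
    _ ≤ _ := by gcongr; exact pow_add_mul_div_pow_le hCl.le hC0 hL m

open MeasureTheory Metric Set ENNReal in
/-- Exponential decay of the densities `Θ(Q)` along nested chains of non-doubling cells
(Lemma 3.1 / cf. David–Mattila Lemma 5.31). -/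
theorem theta_decay_nondoubling_chain
    {X : Type*} [MetricSpace X] [MeasurableSpace X] [BorelSpace X]
    (μ : Measure X) [IsLocallyFiniteMeasure μ]
    (lam : X → ℝ → ℝ) (Cl : ℝ) (hud : IsUpperDoubling μ lam Cl)
    (C0 A0 : ℝ) (hC0 : 1 < C0) (hA0 : 5000 * C0 < A0)
    (D : DavidMattila μ C0 A0)
    (α : ℝ) (hα : 200 ≤ α)
    (l₀ : ℕ) (hl₀ : (100 : ℝ) ^ l₀ ≤ C0 / α) (hl₀' : C0 / α < (100 : ℝ) ^ (l₀ + 1))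
    (hbig : Cl ^ ⌈Real.logb 2 A0⌉ < C0 ^ ((l₀ : ℝ) / 2)) :
    ∃ C : ℝ, 0 < C ∧
      ∀ (k m : ℕ) (Q : ℕ → Set X),
        (∀ j ≤ m, Q j ∈ D.cells (k + j)) →
        (∀ j < m, Q (j + 1) ⊆ Q j) →
        (∀ j, 1 ≤ j → j ≤ m →
          ENNReal.ofReal C0 *
              μ (ball (D.center (k + j) (Q j)) (D.radius (k + j) (Q j))) <
            μ (ball (D.center (k + j) (Q j)) (100 * D.radius (k + j) (Q j)))) →
        theta μ lam α (D.center (k + m) (Q m)) (D.radius (k + m) (Q m)) ≤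
          ENNReal.ofReal (C * C0 ^ (-((m : ℝ) * (l₀ : ℝ)) / 2)) *
            theta μ lam α (D.center k (Q 0)) (D.radius k (Q 0)) :=
  theta_decay_nondoubling_chain_general μ lam Cl hud C0 A0 hA0 D α hα l₀ hl₀ hbig
end
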